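/- arXiv:2110.04114 — 3 statements merged into one kernel-verified Lean document; each statement's English description precedes it below -/
import Mathlib

section
/- Let Φ₁(z) = μz + c and Φ₂(z) = νz + d with |μ| ≤ 1 and |ν| ≤ 1, and suppose the composition operators C_{Φ₁} and C_{Φ₂} are bounded on H_E(ζ). Then C_{Φ₁}^* = C_{Φ₂} if and only if c = 0, d = 0 and \bar{μ} = ν. -/
/-!
Eventually `ζ n ≥ 1`, so the Taylor coefficients `f n / ζ n` of `f ∈ H_E(ζ)` are bounded and `f` is
determined by the germ at `0` of the function it represents. A composition operator is therefore
determined by what it does to monomials: `C_Φ` fixes the constants, `C_{μz+c}` sends `z` to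
`μ z + c`, and `C_{μz}` is the diagonal operator `zᵏ ↦ μᵏ zᵏ`. In the orthonormal basis
`eₖ = zᵏ / ζₖ`, `C_{Φ₁}* = C_{Φ₂}` says that the matrices are conjugate transposes of each other;
the entries `(0,1)`, `(1,0)`, `(1,1)` give `d = 0`, `c = 0`, `ν = conj μ`, and conversely the
diagonal matrices `diag (μᵏ)` and `diag (conj μᵏ)` are adjoint.
-/

open Filter ContinuousLinearMap
open scoped ComplexConjugate

noncomputable section

/-- The weighted Hardy space of entire functions `H_E(ζ)`, realized as the Hilbert space of
coefficient sequences: an entire function `g z = ∑ bₙ zⁿ` with `∑ |bₙ|² ζₙ² < ∞` is encoded by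
the `ℓ²`-sequence `n ↦ bₙ * ζₙ`.  With this identification the `lp`-inner product
`⟪f, g⟫ = ∑ conj (f n) * g n` is exactly `∑ conj bₙ * cₙ * ζₙ²` (Mathlib's convention:
conjugate-linear in the first variable). -/
abbrev HE (_ζ : ℕ → ℝ) : Type := lp (fun _ : ℕ => ℂ) 2

/-- The `n`-th Taylor coefficient `bₙ` of an element of `H_E(ζ)`. -/
def HE.coeff (ζ : ℕ → ℝ) (f : HE ζ) (n : ℕ) : ℂ := f n / (ζ n : ℂ)

/-- The entire function `z ↦ ∑ bₙ zⁿ` represented by an element of `H_E(ζ)`. -/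
def HE.toFun (ζ : ℕ → ℝ) (f : HE ζ) : ℂ → ℂ := fun z => ∑' n, HE.coeff ζ f n * z ^ n

open FormalMultilinearSeries
open scoped ComplexInnerProductSpace NNReal lp

section MatrixEntries

variable {ι 𝕜 : Type*} [DecidableEq ι] [RCLike 𝕜]

theorem lp.ext_continuousLinearMap_single_one {F : Type*} [AddCommMonoid F] [Module 𝕜 F]
    [TopologicalSpace F] [T2Space F] {A B : ℓ²(ι, 𝕜) →L[𝕜] F}
    (h : ∀ i, A (lp.single 2 i 1) = B (lp.single 2 i 1)) : A = B :=
  lp.ext_continuousLinearMap (ENNReal.ofNat_ne_top (n := 2)) fun i =>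
    ContinuousLinearMap.ext_ring (h i)

theorem lp.adjoint_apply_single_one (A : ℓ²(ι, 𝕜) →L[𝕜] ℓ²(ι, 𝕜)) (i j : ι) :
    adjoint A (lp.single 2 j 1) i = conj (A (lp.single 2 i 1) j) := by
  have h := A.adjoint_inner_right (lp.single 2 i 1) (lp.single 2 j 1)
  rw [lp.inner_single_left, lp.inner_single_right, ← inner_conj_symm] at h
  simpa using h

theorem lp.adjoint_eq_iff (A B : ℓ²(ι, 𝕜) →L[𝕜] ℓ²(ι, 𝕜)) :
    adjoint A = B ↔ ∀ i j, B (lp.single 2 j 1) i = conj (A (lp.single 2 i 1) j) := by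
  simp_rw [← lp.adjoint_apply_single_one A]
  constructor
  · rintro rfl i j
    rfl
  · intro h
    exact lp.ext_continuousLinearMap_single_one fun j => lp.ext <| funext fun i => (h i j).symm

end MatrixEntries

theorem eventually_one_le_of_tendsto_rpow_one_div {ζ : ℕ → ℝ} (hζ : ∀ n, 0 ≤ ζ n)
    (hlim : Tendsto (fun n : ℕ => (ζ n) ^ ((1 : ℝ) / n)) atTop atTop) :
    ∀ᶠ n in atTop, 1 ≤ ζ n := by
  filter_upwards [hlim.eventually_ge_atTop 1, eventually_gt_atTop 0] with n hn hn0
  by_contra! h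
  exact (Real.rpow_lt_one (hζ n) h (by positivity)).not_ge hn

namespace HE

variable {ζ : ℕ → ℝ}

theorem toFun_eq_ofScalarsSum (f : HE ζ) : HE.toFun ζ f = ofScalarsSum (HE.coeff ζ f) := by
  rw [ofScalarsSum_eq_tsum]
  rfl

theorem one_le_radius (h1 : ∀ᶠ n in atTop, 1 ≤ ζ n) (f : HE ζ) :
    1 ≤ (ofScalars ℂ (HE.coeff ζ f)).radius := by
  refine mod_cast (ofScalars ℂ (HE.coeff ζ f)).le_radius_of_isBigO (r := 1) <|
    Asymptotics.IsBigO.of_bound ‖f‖ ?_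
  filter_upwards [h1] with n hn
  have hpos : 0 < ζ n := one_pos.trans_le hn
  calc ‖‖ofScalars ℂ (HE.coeff ζ f) n‖ * ((1 : ℝ≥0) : ℝ) ^ n‖ = ‖f n‖ / ζ n := by
        simp [HE.coeff, norm_div, abs_of_pos hpos]
    _ ≤ ‖f n‖ := div_le_self (norm_nonneg _) hn
    _ ≤ ‖f‖ * ‖(1 : ℝ)‖ := by simpa using lp.norm_apply_le_norm (by norm_num) f n

theorem hasFPowerSeriesAt_toFun (h1 : ∀ᶠ n in atTop, 1 ≤ ζ n) (f : HE ζ) :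
    HasFPowerSeriesAt (HE.toFun ζ f) (ofScalars ℂ (HE.coeff ζ f)) 0 := by
  rw [toFun_eq_ofScalarsSum]
  exact ((ofScalars ℂ (HE.coeff ζ f)).hasFPowerSeriesOnBall
    (zero_lt_one.trans_le (one_le_radius h1 f))).hasFPowerSeriesAt

theorem toFun_injective (hζ : ∀ n, ζ n ≠ 0) (h1 : ∀ᶠ n in atTop, 1 ≤ ζ n) :
    Function.Injective (HE.toFun ζ) := by
  intro f g h
  have hcoeff : HE.coeff ζ f = HE.coeff ζ g := ofScalars_series_injective ℂ ℂ <|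
    (hasFPowerSeriesAt_toFun h1 f).eq_formalMultilinearSeries (h ▸ hasFPowerSeriesAt_toFun h1 g)
  refine lp.ext <| funext fun n => ?_
  simpa [HE.coeff, hζ n] using congrFun hcoeff n

theorem toFun_single (k : ℕ) (a z : ℂ) :
    HE.toFun ζ (lp.single 2 k a) z = a / ζ k * z ^ k := by
  rw [HE.toFun, tsum_eq_single k fun n hn => by simp [HE.coeff, lp.single_apply, hn]]
  simp [HE.coeff, lp.single_apply]

theorem toFun_single_add_single {k l : ℕ} (hkl : k ≠ l) (a b z : ℂ) :
    HE.toFun ζ (lp.single 2 k a + lp.single 2 l b) z = a / ζ k * z ^ k + b / ζ l * z ^ l := by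
  rw [HE.toFun, tsum_eq_sum (s := {k, l}) fun n hn => ?_, Finset.sum_pair hkl]
  · simp [HE.coeff, lp.single_apply, hkl, hkl.symm]
  · simp only [Finset.mem_insert, Finset.mem_singleton, not_or] at hn
    simp [HE.coeff, lp.single_apply, hn.1, hn.2]

def IsCompositionOperator (ζ : ℕ → ℝ) (T : HE ζ →L[ℂ] HE ζ) (Φ : ℂ → ℂ) : Prop :=
  ∀ f z, HE.toFun ζ (T f) z = HE.toFun ζ f (Φ z)

namespace IsCompositionOperator

variable (hζ : ∀ n, ζ n ≠ 0) (h1 : ∀ᶠ n in atTop, 1 ≤ ζ n) {T : HE ζ →L[ℂ] HE ζ}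
include hζ h1

theorem apply_single_zero {Φ : ℂ → ℂ} (hT : IsCompositionOperator ζ T Φ) :
    T (lp.single 2 0 1) = lp.single 2 0 1 :=
  toFun_injective hζ h1 <| funext fun z => by simp [hT _ z, toFun_single]

theorem apply_single_one {μ c : ℂ} (hT : IsCompositionOperator ζ T fun z => μ * z + c) :
    T (lp.single 2 1 1) = lp.single 2 0 (c * ζ 0 / ζ 1) + lp.single 2 1 μ := by
  refine toFun_injective hζ h1 <| funext fun z => ?_
  rw [hT, toFun_single, toFun_single_add_single zero_ne_one]
  field_simp [hζ 0, hζ 1]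
  ring

theorem apply_single_of_linear {μ : ℂ} (hT : IsCompositionOperator ζ T fun z => μ * z) (k : ℕ) :
    T (lp.single 2 k 1) = lp.single 2 k (μ ^ k) :=
  toFun_injective hζ h1 <| funext fun z => by
    rw [hT, toFun_single, toFun_single, mul_pow]
    ring

end IsCompositionOperator

end HE

open HE.IsCompositionOperator in
theorem adjoint_composition_eq_composition_iff_general
    (ζ : ℕ → ℝ) (hζ : ∀ n, 0 < ζ n)
    (hlim : Tendsto (fun n : ℕ => (ζ n) ^ ((1 : ℝ) / n)) atTop atTop)
    (μ c ν d : ℂ)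
    (T₁ T₂ : HE ζ →L[ℂ] HE ζ)
    (hT₁ : ∀ f : HE ζ, ∀ z : ℂ, HE.toFun ζ (T₁ f) z = HE.toFun ζ f (μ * z + c))
    (hT₂ : ∀ f : HE ζ, ∀ z : ℂ, HE.toFun ζ (T₂ f) z = HE.toFun ζ f (ν * z + d)) :
    adjoint T₁ = T₂ ↔ c = 0 ∧ d = 0 ∧ conj μ = ν := by
  have hζ₀ : ∀ n, ζ n ≠ 0 := fun n => (hζ n).ne'
  have h1 := eventually_one_le_of_tendsto_rpow_one_div (fun n => (hζ n).le) hlim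
  rw [lp.adjoint_eq_iff]
  constructor
  · intro h
    have hT₁e₀ := apply_single_zero hζ₀ h1 hT₁
    have hT₂e₀ := apply_single_zero hζ₀ h1 hT₂
    have hT₁e₁ := apply_single_one hζ₀ h1 hT₁
    have hT₂e₁ := apply_single_one hζ₀ h1 hT₂
    refine ⟨?_, ?_, ?_⟩
    · simpa [hT₁e₁, hT₂e₀, lp.single_apply, hζ₀, eq_comm (a := (0 : ℂ))] using h 1 0
    · simpa [hT₁e₀, hT₂e₁, lp.single_apply, hζ₀] using h 0 1
    · simpa [hT₁e₁, hT₂e₁, lp.single_apply] using (h 1 1).symm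
  · rintro ⟨rfl, rfl, rfl⟩ i j
    have hT₁' : HE.IsCompositionOperator ζ T₁ (μ * ·) := fun f z => by
      simpa only [add_zero] using hT₁ f z
    have hT₂' : HE.IsCompositionOperator ζ T₂ (conj μ * ·) := fun f z => by
      simpa only [add_zero] using hT₂ f z
    rw [apply_single_of_linear hζ₀ h1 hT₁', apply_single_of_linear hζ₀ h1 hT₂']
    rcases eq_or_ne i j with rfl | hij
    · simp
    · simp [lp.single_apply, hij, hij.symm]

/-- For `Φ₁ z = μ z + c` and `Φ₂ z = ν z + d` with `|μ| ≤ 1`, `|ν| ≤ 1` inducing bounded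
composition operators on `H_E(ζ)`, one has `C_{Φ₁}* = C_{Φ₂}` iff `c = 0`, `d = 0` and
`conj μ = ν`. -/
theorem adjoint_composition_eq_composition_iff
    (ζ : ℕ → ℝ) (hζ : ∀ n, 0 < ζ n)
    (hlim : Tendsto (fun n : ℕ => (ζ n) ^ ((1 : ℝ) / n)) atTop atTop)
    (μ c ν d : ℂ) (hμ : ‖μ‖ ≤ 1) (hν : ‖ν‖ ≤ 1)
    (T₁ T₂ : HE ζ →L[ℂ] HE ζ)
    (hT₁ : ∀ f : HE ζ, ∀ z : ℂ, HE.toFun ζ (T₁ f) z = HE.toFun ζ f (μ * z + c))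
    (hT₂ : ∀ f : HE ζ, ∀ z : ℂ, HE.toFun ζ (T₂ f) z = HE.toFun ζ f (ν * z + d)) :
    adjoint T₁ = T₂ ↔ c = 0 ∧ d = 0 ∧ conj μ = ν :=
  adjoint_composition_eq_composition_iff_general ζ hζ hlim μ c ν d T₁ T₂ hT₁ hT₂
end
end

section
/- Let Φ₁(z) = μz + c and Φ₂(z) = νz + d with c, d ∈ ℂ, |μ| ≤ 1 and |ν| ≤ 1, and let Υ₁, Υ₂ be entire functions on ℂ such that C_{Υ₁,Φ₁} and C_{Υ₂,Φ₂} are bounded on H_E(ζ). Then C_{Υ₁,Φ₁}^* = C_{Υ₂,Φ₂} if and only if Υ₁(z) = ζ₀² Υ₁(0) K_{Φ₂(0)}(z) and Υ₂(z) = ζ₀² \overline{Υ₁(0)} K_{Φ₁(0)}(z) for all z ∈ ℂ, and one of the following holds: (i) Υ₁(0) = 0, in which case Υ₁ ≡ 0, Υ₂ ≡ 0 and hence C_{Υ₁,Φ₁} = 0 = C_{Υ₂,Φ₂}; or (ii) Υ₁(0) ≠ 0 and K_z(Φ₂(0)) · K_{Φ₁(z)}(w) = K_{Φ₁(0)}(w)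 · K_z(Φ₂(w)) for all z, w ∈ ℂ. -/
open Filter ContinuousLinearMap
open scoped ComplexConjugate

noncomputable section

/-!
Write `k_p := K p`, so that `f z = ⟪k_z, f⟫` for every `f ∈ H_E(ζ)`. Since an element of `H_E(ζ)`
is determined by its function (uniqueness of Taylor coefficients), testing against kernels gives
`C_{Υ₁,Φ₁}* k_z = conj (Υ₁ z) • k_{Φ₁ z}`, and the kernels determine bounded operators, so
`C_{Υ₁,Φ₁}* = C_{Υ₂,Φ₂}` amounts to the functional equation
`Υ₂ w · k_z(Φ₂ w) = conj (Υ₁ z) · k_{Φ₁ z}(w)` for all `z, w`.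
Because `k_p(0) = k_0(w) = ζ₀⁻²`, putting `z = 0` and then `w = 0` expresses `Υ₂` and `Υ₁`
through kernels; substituting back, the equation becomes `ζ₀² conj (Υ₁ 0)` times the kernel
identity of (ii).
-/

open FormalMultilinearSeries (ofScalars ofScalars_norm ofScalars_sum_eq ofScalars_series_injective)
open scoped ComplexInnerProductSpace

variable {ζ : ℕ → ℝ}

namespace HE

lemma coeff_injective (hζ : ∀ n, ζ n ≠ 0) : Function.Injective (coeff ζ) := by
  intro f g h
  ext n
  have := congrFun h n
  rwa [coeff, coeff, div_left_inj' (Complex.ofReal_ne_zero.mpr (hζ n))] at this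

lemma toFun_apply_zero (f : HE ζ) : toFun ζ f 0 = coeff ζ f 0 := by
  rw [toFun, tsum_eq_single 0 fun n hn => by rw [zero_pow hn, mul_zero], pow_zero, mul_one]

lemma toFun_smul (a : ℂ) (f : HE ζ) (w : ℂ) : toFun ζ (a • f) w = a * toFun ζ f w := by
  simp only [toFun, coeff, lp.coeFn_smul, Pi.smul_apply, smul_eq_mul, ← tsum_mul_left]
  exact tsum_congr fun n => by ring

lemma toFun_zero : toFun ζ 0 = 0 := by
  ext z
  simp [toFun, coeff]

def IsReproducingKernel (ζ : ℕ → ℝ) (K : ℂ → HE ζ) : Prop :=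
  ∀ p n, HE.coeff ζ (K p) n = (conj p) ^ n / (ζ n : ℂ) ^ 2

def IsWeightedComposition (ζ : ℕ → ℝ) (Υ Φ : ℂ → ℂ) (T : HE ζ →L[ℂ] HE ζ) : Prop :=
  ∀ f z, toFun ζ (T f) z = Υ z * toFun ζ f (Φ z)

namespace IsReproducingKernel

variable {K : ℂ → HE ζ}

lemma apply_eq (hK : IsReproducingKernel ζ K) (hζ : ∀ n, ζ n ≠ 0) (p : ℂ) (n : ℕ) :
    K p n = (conj p) ^ n / (ζ n : ℂ) := by
  have hζn : (ζ n : ℂ) ≠ 0 := Complex.ofReal_ne_zero.mpr (hζ n)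
  have h := hK p n
  rw [coeff, div_eq_iff hζn] at h
  rw [h]
  field_simp

lemma toFun_eq_inner (hK : IsReproducingKernel ζ K) (hζ : ∀ n, ζ n ≠ 0) (f : HE ζ) (z : ℂ) :
    toFun ζ f z = ⟪K z, f⟫ := by
  rw [lp.inner_eq_tsum]
  refine tsum_congr fun n => ?_
  rw [RCLike.inner_apply, hK.apply_eq hζ, coeff, map_div₀, map_pow, Complex.conj_conj,
    Complex.conj_ofReal]
  ring

lemma toFun_kernel_eq_conj (hK : IsReproducingKernel ζ K) (hζ : ∀ n, ζ n ≠ 0) (p q : ℂ) :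
    toFun ζ (K q) p = conj (toFun ζ (K p) q) := by
  rw [hK.toFun_eq_inner hζ, hK.toFun_eq_inner hζ, inner_conj_symm]

lemma toFun_kernel_apply_zero (hK : IsReproducingKernel ζ K) (p : ℂ) :
    toFun ζ (K p) 0 = 1 / (ζ 0 : ℂ) ^ 2 := by
  rw [toFun_apply_zero, hK, pow_zero]

lemma toFun_kernel_zero (hK : IsReproducingKernel ζ K) (hζ : ∀ n, ζ n ≠ 0) (w : ℂ) :
    toFun ζ (K 0) w = 1 / (ζ 0 : ℂ) ^ 2 := by
  rw [hK.toFun_kernel_eq_conj hζ, hK.toFun_kernel_apply_zero, map_div₀, map_one, map_pow,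
    Complex.conj_ofReal]

/-- Cauchy–Schwarz against `K 1 = (ζₙ⁻¹)ₙ ∈ ℓ²`. -/
lemma summable_norm_coeff (hK : IsReproducingKernel ζ K) (hζ : ∀ n, ζ n ≠ 0) (f : HE ζ) :
    Summable fun n => ‖coeff ζ f n‖ := by
  have hholder : (2 : ENNReal).toReal.HolderConjugate (2 : ENNReal).toReal := by
    norm_num [Real.holderConjugate_iff]
  refine (lp.summable_mul hholder (K 1) f).congr fun n => ?_
  rw [hK.apply_eq hζ, coeff, norm_div, norm_div, map_one, one_pow, norm_one]
  ring

lemma hasFPowerSeriesAt_toFun (hK : IsReproducingKernel ζ K) (hζ : ∀ n, ζ n ≠ 0) (f : HE ζ) :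
    HasFPowerSeriesAt (toFun ζ f) (ofScalars ℂ (coeff ζ f)) 0 := by
  have hradius : 0 < (ofScalars ℂ (coeff ζ f)).radius := by
    refine zero_lt_one.trans_le ?_
    simpa using (ofScalars ℂ (coeff ζ f)).le_radius_of_summable_norm (r := 1)
      (by simpa [ofScalars_norm] using hK.summable_norm_coeff hζ f)
  have hsum : (ofScalars ℂ (coeff ζ f)).sum = toFun ζ f :=
    funext fun z => ofScalars_sum_eq (E := ℂ) (coeff ζ f) z
  exact hsum ▸ ((ofScalars ℂ (coeff ζ f)).hasFPowerSeriesOnBall hradius).hasFPowerSeriesAt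

lemma toFun_injective (hK : IsReproducingKernel ζ K) (hζ : ∀ n, ζ n ≠ 0) :
    Function.Injective (toFun ζ) := by
  intro f g h
  refine coeff_injective hζ (ofScalars_series_injective ℂ ℂ ?_)
  exact (hK.hasFPowerSeriesAt_toFun hζ f).eq_formalMultilinearSeries
    (h ▸ hK.hasFPowerSeriesAt_toFun hζ g)

/-- The adjoints agree as functions: `(A* f)(z) = ⟪A k_z, f⟫`. -/
lemma continuousLinearMap_ext (hK : IsReproducingKernel ζ K) (hζ : ∀ n, ζ n ≠ 0)
    {A B : HE ζ →L[ℂ] HE ζ}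
    (h : ∀ z, A (K z) = B (K z)) : A = B := by
  have hadj : adjoint A = adjoint B := ContinuousLinearMap.ext fun f =>
    hK.toFun_injective hζ <| funext fun z => by
      rw [hK.toFun_eq_inner hζ, hK.toFun_eq_inner hζ, adjoint_inner_right, adjoint_inner_right,
        h]
  simpa using congrArg adjoint hadj

variable {Υ₁ Υ₂ Φ₁ Φ₂ : ℂ → ℂ} {T₁ T₂ : HE ζ →L[ℂ] HE ζ}

lemma eq_zero_of_isWeightedComposition (hK : IsReproducingKernel ζ K) (hζ : ∀ n, ζ n ≠ 0)
    (hT : IsWeightedComposition ζ Υ₁ Φ₁ T₁) (hΥ : ∀ z, Υ₁ z = 0) : T₁ = 0 :=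
  ContinuousLinearMap.ext fun f => hK.toFun_injective hζ <| by
    ext z
    rw [hT, hΥ, zero_mul, zero_apply, toFun_zero, Pi.zero_apply]

lemma adjoint_apply_kernel (hK : IsReproducingKernel ζ K) (hζ : ∀ n, ζ n ≠ 0)
    (hT : IsWeightedComposition ζ Υ₁ Φ₁ T₁) (z : ℂ) :
    adjoint T₁ (K z) = conj (Υ₁ z) • K (Φ₁ z) :=
  hK.toFun_injective hζ <| funext fun w => by
    rw [toFun_smul, hK.toFun_eq_inner hζ, adjoint_inner_right, ← inner_conj_symm,
      ← hK.toFun_eq_inner hζ, hT, map_mul, ← hK.toFun_kernel_eq_conj hζ]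

lemma adjoint_eq_iff (hK : IsReproducingKernel ζ K) (hζ : ∀ n, ζ n ≠ 0)
    (hT₁ : IsWeightedComposition ζ Υ₁ Φ₁ T₁)
    (hT₂ : IsWeightedComposition ζ Υ₂ Φ₂ T₂) :
    adjoint T₁ = T₂ ↔ ∀ z w,
      Υ₂ w * toFun ζ (K z) (Φ₂ w) = conj (Υ₁ z) * toFun ζ (K (Φ₁ z)) w := by
  have hkernel : ∀ z, T₂ (K z) = adjoint T₁ (K z) ↔ ∀ w,
      Υ₂ w * toFun ζ (K z) (Φ₂ w) = conj (Υ₁ z) * toFun ζ (K (Φ₁ z)) w := fun z => by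
    rw [hK.adjoint_apply_kernel hζ hT₁, ← (hK.toFun_injective hζ).eq_iff, funext_iff]
    simp only [toFun_smul]
    exact forall_congr' fun w => by rw [hT₂]
  simp only [← hkernel]
  exact ⟨fun h z => by rw [h], fun h => (hK.continuousLinearMap_ext hζ h).symm⟩

lemma weights_eq_of_kernel_eq (hK : IsReproducingKernel ζ K) (hζ : ∀ n, ζ n ≠ 0)
    (hs : ∀ z w, Υ₂ w * toFun ζ (K z) (Φ₂ w) = conj (Υ₁ z) * toFun ζ (K (Φ₁ z)) w) :
    (∀ z, Υ₁ z = (ζ 0 : ℂ) ^ 2 * Υ₁ 0 * toFun ζ (K (Φ₂ 0)) z) ∧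
      ∀ w, Υ₂ w = (ζ 0 : ℂ) ^ 2 * conj (Υ₁ 0) * toFun ζ (K (Φ₁ 0)) w := by
  have hζ0 : (ζ 0 : ℂ) ≠ 0 := Complex.ofReal_ne_zero.mpr (hζ 0)
  have h₂ : ∀ w, Υ₂ w = (ζ 0 : ℂ) ^ 2 * conj (Υ₁ 0) * toFun ζ (K (Φ₁ 0)) w := fun w => by
    have h := hs 0 w
    rw [hK.toFun_kernel_zero hζ] at h
    field_simp at h
    linear_combination h
  have hconj : ∀ z, conj (Υ₁ z) = (ζ 0 : ℂ) ^ 2 * conj (Υ₁ 0) * toFun ζ (K z) (Φ₂ 0) := fun z => by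
    have h := hs z 0
    rw [h₂, hK.toFun_kernel_apply_zero, hK.toFun_kernel_apply_zero] at h
    field_simp at h
    linear_combination -h
  refine ⟨fun z => ?_, h₂⟩
  rw [← Complex.conj_conj (Υ₁ z), hconj, map_mul, map_mul, map_pow, Complex.conj_ofReal,
    Complex.conj_conj, ← hK.toFun_kernel_eq_conj hζ]

/-- After substituting the weights, both sides of the kernel equation carry the factor
`ζ₀² conj (Υ₁ 0)`. -/
lemma kernel_eq_iff_of_weights_eq (hK : IsReproducingKernel ζ K) (hζ : ∀ n, ζ n ≠ 0)
    (h₁ : ∀ z, Υ₁ z = (ζ 0 : ℂ) ^ 2 * Υ₁ 0 * toFun ζ (K (Φ₂ 0)) z)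
    (h₂ : ∀ w, Υ₂ w = (ζ 0 : ℂ) ^ 2 * conj (Υ₁ 0) * toFun ζ (K (Φ₁ 0)) w) :
    (∀ z w, Υ₂ w * toFun ζ (K z) (Φ₂ w) = conj (Υ₁ z) * toFun ζ (K (Φ₁ z)) w) ↔
      Υ₁ 0 = 0 ∨ ∀ z w, toFun ζ (K z) (Φ₂ 0) * toFun ζ (K (Φ₁ z)) w =
        toFun ζ (K (Φ₁ 0)) w * toFun ζ (K z) (Φ₂ w) := by
  set C := (ζ 0 : ℂ) ^ 2 * conj (Υ₁ 0)
  have hfactor : ∀ z w, (Υ₂ w * toFun ζ (K z) (Φ₂ w) = conj (Υ₁ z) * toFun ζ (K (Φ₁ z)) w ↔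
      C * (toFun ζ (K z) (Φ₂ 0) * toFun ζ (K (Φ₁ z)) w) =
        C * (toFun ζ (K (Φ₁ 0)) w * toFun ζ (K z) (Φ₂ w))) := fun z w => by
    rw [h₂, h₁, map_mul, map_mul, map_pow, Complex.conj_ofReal, ← hK.toFun_kernel_eq_conj hζ]
    constructor <;> intro h <;> linear_combination -h
  by_cases h0 : Υ₁ 0 = 0
  · simp [hfactor, C, h0]
  · have hC : C ≠ 0 := mul_ne_zero (pow_ne_zero 2 (Complex.ofReal_ne_zero.mpr (hζ 0)))
      ((map_ne_zero conj).mpr h0)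
    simp only [hfactor, mul_right_inj' hC, h0, false_or]

lemma kernel_eq_iff (hK : IsReproducingKernel ζ K) (hζ : ∀ n, ζ n ≠ 0) :
    (∀ z w, Υ₂ w * toFun ζ (K z) (Φ₂ w) = conj (Υ₁ z) * toFun ζ (K (Φ₁ z)) w) ↔
      (∀ z, Υ₁ z = (ζ 0 : ℂ) ^ 2 * Υ₁ 0 * toFun ζ (K (Φ₂ 0)) z) ∧
      (∀ w, Υ₂ w = (ζ 0 : ℂ) ^ 2 * conj (Υ₁ 0) * toFun ζ (K (Φ₁ 0)) w) ∧
      (Υ₁ 0 = 0 ∨ ∀ z w, toFun ζ (K z) (Φ₂ 0) * toFun ζ (K (Φ₁ z)) w =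
        toFun ζ (K (Φ₁ 0)) w * toFun ζ (K z) (Φ₂ w)) := by
  refine ⟨fun hs => ?_, fun ⟨h₁, h₂, h⟩ => (hK.kernel_eq_iff_of_weights_eq hζ h₁ h₂).mpr h⟩
  obtain ⟨h₁, h₂⟩ := hK.weights_eq_of_kernel_eq hζ hs
  exact ⟨h₁, h₂, (hK.kernel_eq_iff_of_weights_eq hζ h₁ h₂).mp hs⟩

end IsReproducingKernel

end HE

theorem adjoint_weighted_composition_eq_weighted_composition_iff_general
    (ζ : ℕ → ℝ) (hζ : ∀ n, 0 < ζ n)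
    (μ c ν d : ℂ)
    (Υ₁ Υ₂ : ℂ → ℂ)
    (K : ℂ → HE ζ) (hK : ∀ p n, HE.coeff ζ (K p) n = (conj p) ^ n / (ζ n : ℂ) ^ 2)
    (T₁ T₂ : HE ζ →L[ℂ] HE ζ)
    (hT₁ : ∀ f : HE ζ, ∀ z : ℂ, HE.toFun ζ (T₁ f) z = Υ₁ z * HE.toFun ζ f (μ * z + c))
    (hT₂ : ∀ f : HE ζ, ∀ z : ℂ, HE.toFun ζ (T₂ f) z = Υ₂ z * HE.toFun ζ f (ν * z + d)) :
    adjoint T₁ = T₂ ↔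
      ((∀ z : ℂ, Υ₁ z = (ζ 0 : ℂ) ^ 2 * Υ₁ 0 * HE.toFun ζ (K d) z) ∧
       (∀ z : ℂ, Υ₂ z = (ζ 0 : ℂ) ^ 2 * conj (Υ₁ 0) * HE.toFun ζ (K c) z) ∧
       ((Υ₁ 0 = 0 ∧ (∀ z : ℂ, Υ₁ z = 0) ∧ (∀ z : ℂ, Υ₂ z = 0) ∧ T₁ = 0 ∧ T₂ = 0) ∨
        (Υ₁ 0 ≠ 0 ∧ ∀ z w : ℂ,
          HE.toFun ζ (K z) d * HE.toFun ζ (K (μ * z + c)) w =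
            HE.toFun ζ (K c) w * HE.toFun ζ (K z) (ν * w + d)))) := by
  have hK : HE.IsReproducingKernel ζ K := hK
  have hζ : ∀ n, ζ n ≠ 0 := fun n => (hζ n).ne'
  rw [hK.adjoint_eq_iff hζ hT₁ hT₂, hK.kernel_eq_iff hζ]
  simp only [mul_zero, zero_add]
  refine and_congr_right fun h₁ => and_congr_right fun h₂ => ⟨fun h => ?_, ?_⟩
  · by_cases h0 : Υ₁ 0 = 0
    · have hΥ₁ : ∀ z, Υ₁ z = 0 := fun z => by rw [h₁, h0, mul_zero, zero_mul]
      have hΥ₂ : ∀ z, Υ₂ z = 0 := fun z => by rw [h₂, h0, map_zero, mul_zero, zero_mul]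
      exact Or.inl ⟨h0, hΥ₁, hΥ₂, hK.eq_zero_of_isWeightedComposition hζ hT₁ hΥ₁,
        hK.eq_zero_of_isWeightedComposition hζ hT₂ hΥ₂⟩
    · exact Or.inr ⟨h0, h.resolve_left h0⟩
  · rintro (⟨h0, -⟩ | ⟨-, hk⟩)
    exacts [Or.inl h0, Or.inr hk]

/-- For `Φ₁ z = μ z + c`, `Φ₂ z = ν z + d` (`|μ| ≤ 1`, `|ν| ≤ 1`) and entire `Υ₁, Υ₂` with
`C_{Υ₁,Φ₁}`, `C_{Υ₂,Φ₂}` bounded on `H_E(ζ)`: `C_{Υ₁,Φ₁}* = C_{Υ₂,Φ₂}` iff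
`Υ₁ z = ζ₀² Υ₁ 0 · K_{Φ₂ 0} z`, `Υ₂ z = ζ₀² conj (Υ₁ 0) · K_{Φ₁ 0} z`, and either
(i) `Υ₁ 0 = 0`, in which case `Υ₁ ≡ 0`, `Υ₂ ≡ 0` and both operators vanish, or
(ii) `Υ₁ 0 ≠ 0` and `K_z(Φ₂ 0) K_{Φ₁ z}(w) = K_{Φ₁ 0}(w) K_z(Φ₂ w)` for all `z, w`. -/
theorem adjoint_weighted_composition_eq_weighted_composition_iff
    (ζ : ℕ → ℝ) (hζ : ∀ n, 0 < ζ n)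
    (hlim : Tendsto (fun n : ℕ => (ζ n) ^ ((1 : ℝ) / n)) atTop atTop)
    (μ c ν d : ℂ) (hμ : ‖μ‖ ≤ 1) (hν : ‖ν‖ ≤ 1)
    (Υ₁ Υ₂ : ℂ → ℂ) (hΥ₁ : Differentiable ℂ Υ₁) (hΥ₂ : Differentiable ℂ Υ₂)
    (K : ℂ → HE ζ) (hK : ∀ p n, HE.coeff ζ (K p) n = (conj p) ^ n / (ζ n : ℂ) ^ 2)
    (T₁ T₂ : HE ζ →L[ℂ] HE ζ)
    (hT₁ : ∀ f : HE ζ, ∀ z : ℂ, HE.toFun ζ (T₁ f) z = Υ₁ z * HE.toFun ζ f (μ * z + c))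
    (hT₂ : ∀ f : HE ζ, ∀ z : ℂ, HE.toFun ζ (T₂ f) z = Υ₂ z * HE.toFun ζ f (ν * z + d)) :
    adjoint T₁ = T₂ ↔
      ((∀ z : ℂ, Υ₁ z = (ζ 0 : ℂ) ^ 2 * Υ₁ 0 * HE.toFun ζ (K d) z) ∧
       (∀ z : ℂ, Υ₂ z = (ζ 0 : ℂ) ^ 2 * conj (Υ₁ 0) * HE.toFun ζ (K c) z) ∧
       ((Υ₁ 0 = 0 ∧ (∀ z : ℂ, Υ₁ z = 0) ∧ (∀ z : ℂ, Υ₂ z = 0) ∧ T₁ = 0 ∧ T₂ = 0) ∨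
        (Υ₁ 0 ≠ 0 ∧ ∀ z w : ℂ,
          HE.toFun ζ (K z) d * HE.toFun ζ (K (μ * z + c)) w =
            HE.toFun ζ (K c) w * HE.toFun ζ (K z) (ν * w + d)))) :=
  adjoint_weighted_composition_eq_weighted_composition_iff_general ζ hζ μ c ν d Υ₁ Υ₂ K hK T₁ T₂ hT₁
    hT₂
end
end

section
/- Let Φ(z) = νz − d for all z ∈ ℂ with |ν| ≤ 1, and suppose the composition operator C_Φ is bounded on H_E(ζ). Then C_Φ is a co-isometry (i.e. C_Φ C_Φ^* is the identity on H_E(ζ)) if and only if d = 0 and |ν| = 1. -/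
open Filter ContinuousLinearMap
open scoped ComplexConjugate

noncomputable section

/-!
The space has the reproducing kernels `k_z(w) = ∑ (w conj z)ⁿ / ζₙ²`, with `⟪k_z, f⟫ = f z`.
The composition operator `T = C_Φ`, `Φ z = ν z - d`, therefore satisfies `T* k_z = k_{Φ z}`.
Since `‖k_z‖² = ∑ |z|²ⁿ / ζₙ²` is a strictly increasing function of `|z|`, a co-isometry
(for which `T*` is isometric) forces `|Φ z| = |z|` for all `z`; at `z = 0` and `z = 1` this gives
`d = 0` and `|ν| = 1`. Conversely, if `Φ z = ν z` with `|ν| = 1`, then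
`⟪T* k_w, T* k_z⟫ = ⟪k_w, k_z⟫` because `(ν w) conj (ν z) = w conj z`, so `T T*` is the identity
on the kernels, which span a dense subspace because a power series vanishing identically is zero.
-/

open scoped InnerProductSpace

theorem summable_pow_div_of_tendsto_rpow_atTop {a : ℕ → ℝ} (ha : ∀ n, 0 < a n)
    (hlim : Tendsto (fun n : ℕ => a n ^ ((1 : ℝ) / n)) atTop atTop) {r : ℝ} (hr : 0 ≤ r) :
    Summable fun n => r ^ n / a n := by
  refine Summable.of_norm_bounded_eventually_nat summable_geometric_two ?_
  filter_upwards [hlim.eventually_ge_atTop (2 * r), eventually_ne_atTop 0] with n hn hn0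
  have hgrowth : (2 * r) ^ n ≤ a n := by
    calc (2 * r) ^ n ≤ (a n ^ ((1 : ℝ) / n)) ^ n := pow_le_pow_left₀ (by positivity) hn n
      _ = a n := by rw [one_div, Real.rpow_inv_natCast_pow (ha n).le hn0]
  rw [Real.norm_of_nonneg (div_nonneg (pow_nonneg hr n) (ha n).le), div_le_iff₀ (ha n)]
  calc r ^ n = (1 / 2) ^ n * (2 * r) ^ n := by rw [← mul_pow]; ring
    _ ≤ (1 / 2) ^ n * a n := by gcongr

theorem tendsto_sq_rpow_one_div_atTop {a : ℕ → ℝ} (ha : ∀ n, 0 < a n)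
    (hlim : Tendsto (fun n : ℕ => a n ^ ((1 : ℝ) / n)) atTop atTop) :
    Tendsto (fun n : ℕ => (a n ^ 2) ^ ((1 : ℝ) / n)) atTop atTop := by
  simp_rw [← Real.rpow_pow_comm (ha _).le]
  exact (tendsto_pow_atTop two_ne_zero).comp hlim

theorem strictMonoOn_tsum_pow_div {a : ℕ → ℝ} (ha : ∀ n, 0 < a n)
    (hsum : ∀ t : ℝ, 0 ≤ t → Summable fun n => t ^ n / a n) :
    StrictMonoOn (fun t : ℝ => ∑' n, t ^ n / a n) (Set.Ici 0) := by
  intro s hs t ht hst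
  refine Summable.tsum_lt_tsum (i := 1) (fun n => ?_) ?_ (hsum s hs) (hsum t ht)
  · gcongr
    exact (ha n).le
  · simpa using div_lt_div_of_pos_right hst (ha 1)

theorem eq_zero_of_tsum_mul_pow_eq_zero {𝕜 : Type*} [NontriviallyNormedField 𝕜] [CompleteSpace 𝕜]
    {c : ℕ → 𝕜} (hc : Summable fun n => ‖c n‖) (h : ∀ z, ∑' n, c n * z ^ n = 0) : c = 0 := by
  set p := FormalMultilinearSeries.ofScalars 𝕜 c
  have hradius : 1 ≤ p.radius := by
    simpa using p.le_radius_of_summable_norm (r := 1)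
      (by simpa [p, FormalMultilinearSeries.ofScalars_norm] using hc)
  have hsum : p.sum = 0 := funext fun z => by
    simpa [p, FormalMultilinearSeries.sum, FormalMultilinearSeries.ofScalars_apply_eq, mul_comm]
      using h z
  have hzero : HasFPowerSeriesAt 0 p 0 := by
    simpa [hsum] using (p.hasFPowerSeriesOnBall (zero_lt_one.trans_le hradius)).hasFPowerSeriesAt
  exact (FormalMultilinearSeries.ofScalars_series_eq_zero 𝕜).1 hzero.eq_zero

namespace HE

variable {ζ : ℕ → ℝ}

theorem norm_conj_pow_div_sq (z : ℂ) (n : ℕ) :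
    ‖conj z ^ n / (ζ n : ℂ)‖ ^ 2 = (‖z‖ ^ 2) ^ n / ζ n ^ 2 := by
  rw [norm_div, norm_pow, RCLike.norm_conj, Complex.norm_real, Real.norm_eq_abs, div_pow,
    sq_abs, ← pow_mul, ← pow_mul, mul_comm]

variable (hζ : ∀ n, 0 < ζ n) (hlim : Tendsto (fun n : ℕ => ζ n ^ ((1 : ℝ) / n)) atTop atTop)
include hζ hlim

theorem summable_pow_div_sq {t : ℝ} (ht : 0 ≤ t) : Summable fun n => t ^ n / ζ n ^ 2 :=
  summable_pow_div_of_tendsto_rpow_atTop (fun n => pow_pos (hζ n) 2)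
    (tendsto_sq_rpow_one_div_atTop hζ hlim) ht

/-- The reproducing kernel `w ↦ ∑ (w conj z)ⁿ / ζₙ²`, whose Taylor coefficients
`conj zⁿ / ζₙ²` are stored as `conj zⁿ / ζₙ`. -/
def kernel (z : ℂ) : HE ζ :=
  ⟨fun n => conj z ^ n / (ζ n : ℂ), memℓp_gen <| by
    simp only [ENNReal.toReal_ofNat, Real.rpow_two, norm_conj_pow_div_sq]
    exact summable_pow_div_sq hζ hlim (sq_nonneg ‖z‖)⟩

theorem kernel_apply (z : ℂ) (n : ℕ) : kernel hζ hlim z n = conj z ^ n / (ζ n : ℂ) := rfl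

theorem inner_kernel_eq_toFun (z : ℂ) (f : HE ζ) : ⟪kernel hζ hlim z, f⟫_ℂ = toFun ζ f z := by
  rw [lp.inner_eq_tsum, toFun]
  refine tsum_congr fun n => ?_
  simp only [RCLike.inner_apply, kernel_apply, coeff, map_div₀, map_pow, Complex.conj_conj,
    Complex.conj_ofReal]
  ring

theorem inner_kernel_kernel (z w : ℂ) :
    ⟪kernel hζ hlim z, kernel hζ hlim w⟫_ℂ = ∑' n, (z * conj w) ^ n / (ζ n : ℂ) ^ 2 := by
  rw [lp.inner_eq_tsum]
  refine tsum_congr fun n => ?_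
  simp only [RCLike.inner_apply, kernel_apply, map_div₀, map_pow, Complex.conj_conj,
    Complex.conj_ofReal]
  ring

theorem norm_kernel_sq (z : ℂ) : ‖kernel hζ hlim z‖ ^ 2 = ∑' n, (‖z‖ ^ 2) ^ n / ζ n ^ 2 := by
  have h := lp.norm_rpow_eq_tsum (p := 2) (by norm_num) (kernel hζ hlim z)
  simp only [ENNReal.toReal_ofNat, Real.rpow_two, kernel_apply, norm_conj_pow_div_sq] at h
  exact h

theorem norm_kernel_eq_norm_kernel_iff {z w : ℂ} :
    ‖kernel hζ hlim z‖ = ‖kernel hζ hlim w‖ ↔ ‖z‖ = ‖w‖ := by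
  have hinj := (strictMonoOn_tsum_pow_div (fun n => pow_pos (hζ n) 2)
    fun _ ht => summable_pow_div_sq hζ hlim ht).injOn
  rw [← sq_eq_sq₀ (norm_nonneg _) (norm_nonneg _), norm_kernel_sq, norm_kernel_sq,
    hinj.eq_iff (sq_nonneg ‖z‖) (sq_nonneg ‖w‖), sq_eq_sq₀ (norm_nonneg _) (norm_nonneg _)]

theorem eq_zero_of_toFun_eq_zero {f : HE ζ} (hf : ∀ z, toFun ζ f z = 0) : f = 0 := by
  have hsummable : Summable fun n => ‖coeff ζ f n‖ := by
    refine Summable.of_nonneg_of_le (fun n => norm_nonneg _) (fun n => ?_)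
      ((summable_pow_div_of_tendsto_rpow_atTop hζ hlim zero_le_one).mul_left ‖f‖)
    rw [coeff, norm_div, Complex.norm_real, Real.norm_of_nonneg (hζ n).le, one_pow, mul_one_div]
    gcongr
    exacts [(hζ n).le, lp.norm_apply_le_norm two_ne_zero f n]
  have hcoeff := eq_zero_of_tsum_mul_pow_eq_zero hsummable hf
  ext n
  simpa [coeff, (hζ n).ne'] using congrFun hcoeff n

theorem ext_inner_kernel {f g : HE ζ}
    (h : ∀ w, ⟪kernel hζ hlim w, f⟫_ℂ = ⟪kernel hζ hlim w, g⟫_ℂ) : f = g :=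
  sub_eq_zero.1 <| eq_zero_of_toFun_eq_zero hζ hlim fun w => by
    rw [← inner_kernel_eq_toFun hζ hlim, inner_sub_right, h, sub_self]

theorem dense_span_range_kernel :
    Dense (Submodule.span ℂ (Set.range (kernel hζ hlim)) : Set (HE ζ)) := by
  rw [Submodule.dense_iff_topologicalClosure_eq_top, Submodule.topologicalClosure_eq_top_iff,
    Submodule.eq_bot_iff]
  intro f hf
  refine ext_inner_kernel hζ hlim fun w => ?_
  rw [inner_zero_right]
  exact (Submodule.mem_orthogonal _ f).1 hf _ (Submodule.subset_span (Set.mem_range_self w))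

theorem adjoint_apply_kernel {T : HE ζ →L[ℂ] HE ζ} {Φ : ℂ → ℂ}
    (hT : ∀ f z, toFun ζ (T f) z = toFun ζ f (Φ z)) (z : ℂ) :
    adjoint T (kernel hζ hlim z) = kernel hζ hlim (Φ z) :=
  ext_inner_right ℂ fun f => by
    rw [adjoint_inner_left, inner_kernel_eq_toFun, inner_kernel_eq_toFun, hT]

end HE

theorem ContinuousLinearMap.norm_adjoint_apply_of_comp_adjoint_eq_id {𝕜 E F : Type*} [RCLike 𝕜]
    [NormedAddCommGroup E] [InnerProductSpace 𝕜 E] [CompleteSpace E]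
    [NormedAddCommGroup F] [InnerProductSpace 𝕜 F] [CompleteSpace F] {T : E →L[𝕜] F}
    (hT : T.comp (adjoint T) = ContinuousLinearMap.id 𝕜 F) (x : F) : ‖adjoint T x‖ = ‖x‖ :=
  (adjoint T).norm_map_iff_adjoint_comp_self.2 (by simpa [one_def] using hT) x

theorem composition_coisometry_iff_general
    (ζ : ℕ → ℝ) (hζ : ∀ n, 0 < ζ n)
    (hlim : Tendsto (fun n : ℕ => (ζ n) ^ ((1 : ℝ) / n)) atTop atTop)
    (ν d : ℂ)
    (T : HE ζ →L[ℂ] HE ζ)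
    (hT : ∀ f : HE ζ, ∀ z : ℂ, HE.toFun ζ (T f) z = HE.toFun ζ f (ν * z - d)) :
    T.comp (adjoint T) = ContinuousLinearMap.id ℂ (HE ζ) ↔ d = 0 ∧ ‖ν‖ = 1 := by
  have hadj := HE.adjoint_apply_kernel hζ hlim hT
  constructor
  · intro hcoisometry
    have hnorm : ∀ z : ℂ, ‖ν * z - d‖ = ‖z‖ := fun z => by
      rw [← HE.norm_kernel_eq_norm_kernel_iff hζ hlim, ← hadj]
      exact norm_adjoint_apply_of_comp_adjoint_eq_id hcoisometry _
    have hd : d = 0 := by simpa using hnorm 0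
    exact ⟨hd, by simpa [hd] using hnorm 1⟩
  · rintro ⟨rfl, hν⟩
    have hunimodular : ν * conj ν = 1 := by
      rw [Complex.mul_conj, Complex.normSq_eq_norm_sq, hν, one_pow, Complex.ofReal_one]
    refine ext_on (HE.dense_span_range_kernel hζ hlim) ?_
    rintro _ ⟨z, rfl⟩
    refine HE.ext_inner_kernel hζ hlim fun w => ?_
    simp only [comp_apply, id_apply, ← adjoint_inner_left, hadj, HE.inner_kernel_kernel, sub_zero,
      map_mul, mul_mul_mul_comm ν w, hunimodular, one_mul]

/-- For `Φ z = ν z - d` with `|ν| ≤ 1` inducing a bounded composition operator on `H_E(ζ)`: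
`C_Φ` is a co-isometry (`C_Φ C_Φ* = I`) iff `d = 0` and `|ν| = 1`. -/
theorem composition_coisometry_iff
    (ζ : ℕ → ℝ) (hζ : ∀ n, 0 < ζ n)
    (hlim : Tendsto (fun n : ℕ => (ζ n) ^ ((1 : ℝ) / n)) atTop atTop)
    (ν d : ℂ) (hν : ‖ν‖ ≤ 1)
    (T : HE ζ →L[ℂ] HE ζ)
    (hT : ∀ f : HE ζ, ∀ z : ℂ, HE.toFun ζ (T f) z = HE.toFun ζ f (ν * z - d)) :
    T.comp (adjoint T) = ContinuousLinearMap.id ℂ (HE ζ) ↔ d = 0 ∧ ‖ν‖ = 1 :=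
  composition_coisometry_iff_general ζ hζ hlim ν d T hT
end
end
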